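/- arXiv:2207.10987 — 2 statements merged into one kernel-verified Lean document; each statement's English description precedes it below -/
import Mathlib

section
/- Let c ≥ 0 be a real number and define W : ℝ → ℂ by W(Y) := −∫_{−∞}^0 e^{ξ³/3 + cξ + iYξ} dξ. Then W is a smooth bounded function and satisfies the inhomogeneous Airy-type equation W''(Y) − c W(Y) − i Y W(Y) = 1 for every Y ∈ ℝ. Equivalently, the tempered distribution with Fourier transform Ŵ(ξ) = −√(2π) e^{ξ³/3 + cξ} 1_{(−∞,0]}(ξ) solves ∂_Y²W − cW − iYW = 1. -/
/-!
Differentiating under the integral sign turns each `Y`-derivative into a factor `iξ`, so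
`W'' - cW - iYW = ∫_{−∞}^0 (ξ² + c + iY) e^{φ(ξ)} dξ` with `φ(ξ) = ξ³/3 + cξ + iYξ`. The integrand
is `∂_ξ e^{φ}`, and `e^{φ}` vanishes at `−∞`, so the integral is `e^{φ(0)} = 1`. Every integral
converges, uniformly in `Y`, because `|ξ|ⁿ e^{ξ³/3 + cξ} ≤ n! e^{c² + 3} e^{ξ}` for `ξ ≤ 0`.
-/

open MeasureTheory

/-- `W(Y) = −∫_{−∞}^0 e^{ξ³/3 + cξ + iYξ} dξ`. -/
noncomputable def airyW (c : ℝ) (Y : ℝ) : ℂ :=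
  -∫ ξ in Set.Iic (0 : ℝ),
      Complex.exp ((ξ : ℂ) ^ 3 / 3 + (c : ℂ) * ξ + Complex.I * Y * ξ)

open Set Filter Topology
open scoped ContDiff

theorem contDiff_of_hasDerivAt_succ {𝕜 F : Type*} [NontriviallyNormedField 𝕜]
    [NormedAddCommGroup F] [NormedSpace 𝕜 F] {f : ℕ → 𝕜 → F}
    (hf : ∀ n x, HasDerivAt (f n) (f (n + 1) x) x) (n : ℕ) : ContDiff 𝕜 ∞ (f n) := by
  have hderiv (n : ℕ) : deriv (f n) = f (n + 1) := funext fun x => (hf n x).deriv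
  have hiter (m n : ℕ) : iteratedDeriv m (f n) = f (n + m) := by
    induction m generalizing n with
    | zero => rfl
    | succ m ih => rw [iteratedDeriv_succ', hderiv, ih, add_right_comm, add_assoc]
  refine contDiff_of_differentiable_iteratedDeriv fun m _ => ?_
  rw [hiter]
  exact fun x => (hf _ x).differentiableAt

/-- From `cξ ≤ c² + ξ²/4` and `ξ³/3 + ξ²/4 ≤ 3 + 2ξ` for `ξ ≤ 0`. -/
theorem cubic_le_of_nonpos (c : ℝ) {ξ : ℝ} (hξ : ξ ≤ 0) :
    ξ ^ 3 / 3 + c * ξ ≤ c ^ 2 + 3 + 2 * ξ := by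
  nlinarith [sq_nonneg (c - ξ / 2), sq_nonneg (ξ + 2),
    mul_nonneg (neg_nonneg.2 hξ) (sq_nonneg (ξ + 2))]

theorem abs_pow_mul_exp_cubic_le (c : ℝ) (n : ℕ) {ξ : ℝ} (hξ : ξ ≤ 0) :
    |ξ| ^ n * Real.exp (ξ ^ 3 / 3 + c * ξ) ≤
      n.factorial * Real.exp (c ^ 2 + 3) * Real.exp ξ := by
  have hpow : |ξ| ^ n ≤ n.factorial * Real.exp (-ξ) := by
    have := Real.pow_div_factorial_le_exp _ (abs_nonneg ξ) n
    rw [div_le_iff₀' (by positivity), abs_of_nonpos hξ] at this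
    rwa [abs_of_nonpos hξ]
  calc |ξ| ^ n * Real.exp (ξ ^ 3 / 3 + c * ξ)
      ≤ n.factorial * Real.exp (-ξ) * Real.exp (c ^ 2 + 3 + 2 * ξ) := by
        gcongr ?_ * Real.exp ?_
        exact cubic_le_of_nonpos c hξ
    _ = n.factorial * Real.exp (c ^ 2 + 3) * Real.exp ξ := by
        rw [mul_assoc, ← Real.exp_add, mul_assoc, ← Real.exp_add]
        ring_nf

noncomputable def airyKernel (c Y ξ : ℝ) : ℂ :=
  Complex.exp ((ξ : ℂ) ^ 3 / 3 + (c : ℂ) * ξ + Complex.I * Y * ξ)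

noncomputable def airyMoment (c : ℝ) (n : ℕ) (Y : ℝ) : ℂ :=
  ∫ ξ in Iic (0 : ℝ), (Complex.I * ξ) ^ n * airyKernel c Y ξ

section
variable (c Y : ℝ)

theorem airyW_eq_neg_airyMoment_zero : airyW c = -airyMoment c 0 := by
  ext Y
  simp [airyW, airyMoment, airyKernel]

@[fun_prop]
theorem continuous_airyKernel : Continuous (airyKernel c Y) := by
  unfold airyKernel; fun_prop

theorem norm_airyKernel (ξ : ℝ) : ‖airyKernel c Y ξ‖ = Real.exp (ξ ^ 3 / 3 + c * ξ) := by
  rw [airyKernel, Complex.norm_exp]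
  congr 1
  simp [← Complex.ofReal_pow]

theorem hasDerivAt_airyKernel (ξ : ℝ) :
    HasDerivAt (airyKernel c Y) ((ξ ^ 2 + c + Complex.I * Y) * airyKernel c Y ξ) ξ := by
  have hphase : HasDerivAt (fun z : ℂ => z ^ 3 / 3 + c * z + Complex.I * Y * z)
      (ξ ^ 2 + c + Complex.I * Y) ξ :=
    ((((hasDerivAt_pow 3 (ξ : ℂ)).div_const 3).add
      ((hasDerivAt_id (ξ : ℂ)).const_mul (c : ℂ))).add
      ((hasDerivAt_id (ξ : ℂ)).const_mul (Complex.I * Y))).congr_deriv (by push_cast; ring)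
  exact (hphase.cexp.comp_ofReal).congr_deriv (mul_comm _ _)

theorem hasDerivAt_airyKernel_param (ξ : ℝ) :
    HasDerivAt (fun Y => airyKernel c Y ξ) (Complex.I * ξ * airyKernel c Y ξ) Y := by
  have hphase : HasDerivAt (fun w : ℂ => (ξ : ℂ) ^ 3 / 3 + c * ξ + Complex.I * w * ξ)
      (Complex.I * ξ) Y := by
    simpa using (((hasDerivAt_id (Y : ℂ)).const_mul Complex.I).mul_const (ξ : ℂ)).const_add
      ((ξ : ℂ) ^ 3 / 3 + c * ξ)
  exact (hphase.cexp.comp_ofReal).congr_deriv (mul_comm _ _)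

theorem tendsto_airyKernel_atBot : Tendsto (airyKernel c Y) atBot (𝓝 0) := by
  rw [tendsto_zero_iff_norm_tendsto_zero]
  refine squeeze_zero' (.of_forall fun ξ => norm_nonneg _) ?_
    (Real.tendsto_exp_atBot.comp (tendsto_atBot_add_const_left _ (c ^ 2 + 3)
      (tendsto_id.const_mul_atBot two_pos)))
  filter_upwards [Iic_mem_atBot 0] with ξ hξ
  rw [norm_airyKernel]
  exact Real.exp_le_exp.2 (cubic_le_of_nonpos c hξ)

theorem integrableOn_airyMoment_integrand (n : ℕ) :
    IntegrableOn (fun ξ : ℝ => (Complex.I * ξ) ^ n * airyKernel c Y ξ) (Iic 0) := by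
  refine Integrable.mono'
    ((integrableOn_exp_Iic 0).const_mul (n.factorial * Real.exp (c ^ 2 + 3)))
    (by fun_prop : Continuous _).aestronglyMeasurable ?_
  filter_upwards [ae_restrict_mem measurableSet_Iic] with ξ hξ
  simpa [norm_airyKernel] using abs_pow_mul_exp_cubic_le c n hξ

theorem hasDerivAt_airyMoment (n : ℕ) :
    HasDerivAt (airyMoment c n) (airyMoment c (n + 1) Y) Y := by
  refine (hasDerivAt_integral_of_dominated_loc_of_deriv_le (x₀ := Y)
    (F := fun Y ξ => (Complex.I * ξ) ^ n * airyKernel c Y ξ)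
    (F' := fun Y ξ => (Complex.I * ξ) ^ (n + 1) * airyKernel c Y ξ)
    (bound := fun ξ => (n + 1).factorial * Real.exp (c ^ 2 + 3) * Real.exp ξ)
    (Metric.ball_mem_nhds Y one_pos)
    (.of_forall fun Y' => (integrableOn_airyMoment_integrand c Y' n).aestronglyMeasurable)
    (integrableOn_airyMoment_integrand c Y n)
    (integrableOn_airyMoment_integrand c Y (n + 1)).aestronglyMeasurable ?_
    ((integrableOn_exp_Iic 0).const_mul _) ?_).2
  · filter_upwards [ae_restrict_mem measurableSet_Iic] with ξ hξ Y' _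
    simpa [norm_airyKernel] using abs_pow_mul_exp_cubic_le c (n + 1) hξ
  · exact .of_forall fun ξ Y' _ =>
      ((hasDerivAt_airyKernel_param c Y' ξ).const_mul ((Complex.I * ξ) ^ n)).congr_deriv
        (by ring)

theorem deriv_airyMoment (n : ℕ) : deriv (airyMoment c n) = airyMoment c (n + 1) :=
  funext fun Y => (hasDerivAt_airyMoment c Y n).deriv

theorem mul_airyMoment_zero_sub_airyMoment_two :
    (c + Complex.I * Y) * airyMoment c 0 Y - airyMoment c 2 Y = 1 := by
  have hsplit : (fun ξ : ℝ => (ξ ^ 2 + c + Complex.I * Y) * airyKernel c Y ξ) = fun ξ =>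
      (c + Complex.I * Y) * ((Complex.I * ξ) ^ 0 * airyKernel c Y ξ) -
        (Complex.I * ξ) ^ 2 * airyKernel c Y ξ := by
    ext ξ
    simp only [mul_pow, Complex.I_sq, pow_zero, one_mul]
    ring
  have h2 := integrableOn_airyMoment_integrand c Y 2
  have h0 := integrableOn_airyMoment_integrand c Y 0
  have hint : IntegrableOn (fun ξ : ℝ => (ξ ^ 2 + c + Complex.I * Y) * airyKernel c Y ξ)
      (Iic 0) := by
    rw [hsplit]
    exact (h0.const_mul _).sub h2
  have hFTC := integral_Iic_of_hasDerivAt_of_tendsto' (fun ξ _ => hasDerivAt_airyKernel c Y ξ)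
    hint (tendsto_airyKernel_atBot c Y)
  rw [hsplit, integral_sub (h0.const_mul _) h2, integral_const_mul] at hFTC
  have hkernel_zero : airyKernel c Y 0 = 1 := by simp [airyKernel]
  rwa [hkernel_zero, sub_zero] at hFTC

end

theorem airyW_solves_general (c : ℝ) :
    ContDiff ℝ (⊤ : ℕ∞) (airyW c) ∧
    (∃ M : ℝ, ∀ Y : ℝ, ‖airyW c Y‖ ≤ M) ∧
    ∀ Y : ℝ,
      deriv (deriv (airyW c)) Y - (c : ℂ) * airyW c Y - Complex.I * Y * airyW c Y = 1 := by
  rw [airyW_eq_neg_airyMoment_zero]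
  refine ⟨?_, ⟨∫ ξ in Iic 0, Real.exp (ξ ^ 3 / 3 + c * ξ), fun Y => ?_⟩, fun Y => ?_⟩
  · exact (contDiff_of_hasDerivAt_succ (fun n Y => hasDerivAt_airyMoment c Y n) 0).neg
  · rw [Pi.neg_apply, norm_neg, airyMoment]
    refine (norm_integral_le_integral_norm _).trans_eq ?_
    simp [norm_airyKernel]
  · simp only [deriv.neg', deriv.fun_neg, deriv_airyMoment, Pi.neg_apply]
    linear_combination mul_airyMoment_zero_sub_airyMoment_two c Y

/-- `W` is a smooth bounded function solving `W'' − cW − iYW = 1`. -/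
theorem airyW_solves (c : ℝ) (hc : 0 ≤ c) :
    ContDiff ℝ (⊤ : ℕ∞) (airyW c) ∧
    (∃ M : ℝ, ∀ Y : ℝ, ‖airyW c Y‖ ≤ M) ∧
    ∀ Y : ℝ,
      deriv (deriv (airyW c)) Y - (c : ℂ) * airyW c Y - Complex.I * Y * airyW c Y = 1 :=
  airyW_solves_general c
end

section
/- There exists a constant C0 ∈ (1,∞) such that for all integers N ≥ 1 and m ≥ 1, all k ∈ ℤ∖{0}, and all ξ ∈ ℝ, the N-th derivative in ξ of the symbol ⟨k,ξ⟩^{m/2} satisfies |∂_ξ^N ⟨k,ξ⟩^{m/2}| ≤ C0^N ⟨k,ξ⟩^{m/2 − N} · ℘(m/2, N) · N!, where ℘(a,N) := ∏_{j=1}^N ⟨a − j − 1⟩. -/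
open scoped BigOperators

/-- Japanese bracket `⟨a⟩ = (1+a²)^{1/2}`. -/
noncomputable def jap (a : ℝ) : ℝ := Real.sqrt (1 + a ^ 2)

/-- Japanese bracket `⟨a,b⟩ = (1+a²+b²)^{1/2}`. -/
noncomputable def jap2 (a b : ℝ) : ℝ := Real.sqrt (1 + a ^ 2 + b ^ 2)

/-- `℘(a,N) = ∏_{j=1}^N ⟨a − j − 1⟩`. -/
noncomputable def wp (a : ℝ) (N : ℕ) : ℝ := ∏ j ∈ Finset.Icc 1 N, jap (a - j - 1)

/-!
Writing `⟨k,ξ⟩^{m/2} = (c + ξ²)^α` with `c = 1 + k²` and `α = m/4`, an induction on `N` gives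
`∂^N (c + x²)^α = ∑ᵢ C(N,i) x^{N-2i} (c + x²)^{α-N+i}` for explicit coefficients `C(N,i)`.
Since `|x| ≤ (c + x²)^{1/2}`, every monomial is at most `(c + x²)^{α-N/2} = ⟨k,ξ⟩^{m/2-N}`, so it
remains to bound `∑ᵢ |C(N,i)|`. The recursion multiplies this sum by at most
`|2α - N - 2| + 2N + 2 ≤ 3 (N+1) ⟨2α - (N+1) - 1⟩`, which produces `3^N ℘(2α, N) N!`.
-/

noncomputable def sqRpowCoeff (α : ℝ) : ℕ → ℕ → ℝ
  | 0, i => if i = 0 then 1 else 0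
  | N + 1, 0 => 2 * (α - N) * sqRpowCoeff α N 0
  | N + 1, i + 1 => 2 * (α - N + (i + 1 : ℕ)) * sqRpowCoeff α N (i + 1)
      + (N - 2 * i : ℕ) * sqRpowCoeff α N i

noncomputable def sqRpowTerm (c α : ℝ) (N i : ℕ) (x : ℝ) : ℝ :=
  x ^ (N - 2 * i) * (c + x ^ 2) ^ (α - N + i)

theorem sum_range_succ_shift {M : Type*} [AddCommMonoid M] (u v : ℕ → M) (n : ℕ)
    (hu : u (n + 1) = 0) :
    u 0 + ∑ i ∈ Finset.range (n + 1), (u (i + 1) + v i)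
      = ∑ i ∈ Finset.range (n + 1), (u i + v i) := by
  rw [Finset.sum_add_distrib, ← add_assoc, add_comm (u 0), ← Finset.sum_range_succ',
    Finset.sum_range_succ, hu, add_zero, Finset.sum_add_distrib]

section Coefficients

variable (α : ℝ)

theorem sqRpowCoeff_eq_zero {N i : ℕ} (h : N < 2 * i) : sqRpowCoeff α N i = 0 := by
  induction N generalizing i with
  | zero => rw [sqRpowCoeff, if_neg (by omega)]
  | succ N ih =>
    obtain _ | i := i
    · omega
    rcases Nat.lt_or_ge N (2 * i) with hN | hN
    · simp [sqRpowCoeff, ih (by omega : N < 2 * (i + 1)), ih hN]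
    · simp [sqRpowCoeff, ih (by omega : N < 2 * (i + 1)), show N - 2 * i = 0 by omega]

theorem sum_sqRpowCoeff_succ_mul (N : ℕ) (t : ℕ → ℝ) :
    ∑ i ∈ Finset.range (N + 2), sqRpowCoeff α (N + 1) i * t i
      = ∑ i ∈ Finset.range (N + 1), (2 * (α - N + i) * sqRpowCoeff α N i * t i
          + (N - 2 * i : ℕ) * sqRpowCoeff α N i * t (i + 1)) := by
  rw [Finset.sum_range_succ', add_comm, ← sum_range_succ_shift _ _ N
    (by simp [sqRpowCoeff_eq_zero α (by omega : N < 2 * (N + 1))])]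
  congr 1
  · simp only [sqRpowCoeff, Nat.cast_zero, add_zero]
  · refine Finset.sum_congr rfl fun i _ ↦ ?_
    simp only [sqRpowCoeff]
    push_cast
    ring

theorem sum_abs_sqRpowCoeff_succ_le (N : ℕ) :
    ∑ i ∈ Finset.range (N + 2), |sqRpowCoeff α (N + 1) i|
      ≤ ∑ i ∈ Finset.range (N + 1),
          (|2 * (α - N + i)| + (N - 2 * i : ℕ)) * |sqRpowCoeff α N i| := by
  have htop : |2 * (α - N + (N + 1 : ℕ))| * |sqRpowCoeff α N (N + 1)| = 0 := by
    simp [sqRpowCoeff_eq_zero α (by omega : N < 2 * (N + 1))]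
  simp_rw [add_mul]
  rw [← sum_range_succ_shift _ _ N htop, Finset.sum_range_succ', add_comm]
  gcongr with i
  · simp [sqRpowCoeff, abs_mul]
  · simp only [sqRpowCoeff]
    refine (abs_add_le _ _).trans_eq ?_
    simp [abs_mul]

theorem one_le_jap (a : ℝ) : 1 ≤ jap a :=
  Real.one_le_sqrt.mpr (le_add_of_nonneg_right (sq_nonneg a))

theorem abs_le_jap (a : ℝ) : |a| ≤ jap a :=
  Real.abs_le_sqrt (le_add_of_nonneg_left zero_le_one)

theorem wp_succ (a : ℝ) (N : ℕ) : wp a (N + 1) = wp a N * jap (a - (N + 1 : ℕ) - 1) :=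
  Finset.prod_Icc_succ_top (by omega) _

theorem sqRpowCoeff_growth_le {N i : ℕ} (hi : i ≤ N) :
    |2 * (α - N + i)| + (N - 2 * i : ℕ) ≤ 3 * (N + 1) * jap (2 * α - (N + 1 : ℕ) - 1) := by
  have hJ := abs_le_jap (2 * α - (N + 1 : ℕ) - 1)
  have hJ1 := one_le_jap (2 * α - (N + 1 : ℕ) - 1)
  have hiN : (i : ℝ) ≤ N := by exact_mod_cast hi
  have hsub : ((N - 2 * i : ℕ) : ℝ) ≤ N := by exact_mod_cast Nat.sub_le N (2 * i)
  have hshift : |2 * (α - N + i)| ≤ |2 * α - (N + 1 : ℕ) - 1| + (N + 2) := by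
    calc |2 * (α - N + i)| = |(2 * α - (N + 1 : ℕ) - 1) + (2 * (i : ℝ) - N + 2)| := by
          push_cast; ring_nf
      _ ≤ |2 * α - (N + 1 : ℕ) - 1| + |2 * (i : ℝ) - N + 2| := abs_add_le _ _
      _ ≤ |2 * α - (N + 1 : ℕ) - 1| + (N + 2) := by
          gcongr
          exact abs_le.mpr ⟨by linarith [(Nat.cast_nonneg i : (0 : ℝ) ≤ i)], by linarith⟩
  have hN : (0 : ℝ) ≤ N := Nat.cast_nonneg N
  nlinarith

theorem sum_abs_sqRpowCoeff_le (N : ℕ) :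
    ∑ i ∈ Finset.range (N + 1), |sqRpowCoeff α N i| ≤ 3 ^ N * wp (2 * α) N * N.factorial := by
  induction N with
  | zero => simp [sqRpowCoeff, wp]
  | succ N ih =>
    set J := jap (2 * α - (N + 1 : ℕ) - 1) with hJ
    calc ∑ i ∈ Finset.range (N + 2), |sqRpowCoeff α (N + 1) i|
        ≤ ∑ i ∈ Finset.range (N + 1), (3 * (N + 1) * J) * |sqRpowCoeff α N i| := by
          refine (sum_abs_sqRpowCoeff_succ_le α N).trans (Finset.sum_le_sum fun i hi ↦ ?_)
          gcongr
          exact sqRpowCoeff_growth_le α (Nat.lt_succ_iff.mp (Finset.mem_range.mp hi))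
      _ ≤ 3 * (N + 1) * J * (3 ^ N * wp (2 * α) N * N.factorial) := by
          rw [← Finset.mul_sum]
          exact mul_le_mul_of_nonneg_left ih
            (mul_nonneg (by positivity) (zero_le_one.trans (one_le_jap _)))
      _ = 3 ^ (N + 1) * wp (2 * α) (N + 1) * (N + 1).factorial := by
          rw [wp_succ, ← hJ, Nat.factorial_succ, Nat.cast_mul, Nat.cast_succ]
          ring

end Coefficients

section Derivatives

variable {c : ℝ} (α : ℝ)

theorem hasDerivAt_pow_mul_add_sq_rpow (hc : 0 < c) (p : ℕ) (q x : ℝ) :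
    HasDerivAt (fun x ↦ x ^ p * (c + x ^ 2) ^ q)
      (p * x ^ (p - 1) * (c + x ^ 2) ^ q + 2 * q * x ^ (p + 1) * (c + x ^ 2) ^ (q - 1)) x := by
  have hbase : HasDerivAt (fun x ↦ c + x ^ 2) (2 * x) x := by
    simpa using (hasDerivAt_pow 2 x).const_add c
  have hpos : c + x ^ 2 ≠ 0 := by positivity
  exact ((hasDerivAt_pow p x).mul (hbase.rpow_const (Or.inl hpos))).congr_deriv (by ring)

theorem hasDerivAt_sqRpowTerm (hc : 0 < c) {N i : ℕ} (h : 2 * i ≤ N) (x : ℝ) :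
    HasDerivAt (sqRpowTerm c α N i)
      (2 * (α - N + i) * sqRpowTerm c α (N + 1) i x
        + (N - 2 * i : ℕ) * sqRpowTerm c α (N + 1) (i + 1) x) x := by
  refine (hasDerivAt_pow_mul_add_sq_rpow hc _ _ x).congr_deriv ?_
  rw [sqRpowTerm, sqRpowTerm, show N + 1 - 2 * i = N - 2 * i + 1 by omega,
    show N + 1 - 2 * (i + 1) = N - 2 * i - 1 by omega]
  push_cast
  ring_nf

theorem iteratedDeriv_add_sq_rpow (hc : 0 < c) (N : ℕ) :
    iteratedDeriv N (fun x ↦ (c + x ^ 2) ^ α)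
      = fun x ↦ ∑ i ∈ Finset.range (N + 1), sqRpowCoeff α N i * sqRpowTerm c α N i x := by
  induction N with
  | zero => funext x; simp [sqRpowCoeff, sqRpowTerm]
  | succ N ih =>
    funext x
    have hterm : ∀ i ∈ Finset.range (N + 1),
        HasDerivAt (fun x ↦ sqRpowCoeff α N i * sqRpowTerm c α N i x)
          (sqRpowCoeff α N i * (2 * (α - N + i) * sqRpowTerm c α (N + 1) i x
            + (N - 2 * i : ℕ) * sqRpowTerm c α (N + 1) (i + 1) x)) x := by
      intro i _
      rcases Nat.lt_or_ge N (2 * i) with h | h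
      · simpa [sqRpowCoeff_eq_zero α h] using hasDerivAt_const x (0 : ℝ)
      · exact (hasDerivAt_sqRpowTerm α hc h x).const_mul _
    rw [iteratedDeriv_succ, ih, (HasDerivAt.fun_sum hterm).deriv,
      sum_sqRpowCoeff_succ_mul]
    exact Finset.sum_congr rfl fun i _ ↦ by ring

theorem abs_sqRpowTerm_le (hc : 0 < c) {N i : ℕ} (h : 2 * i ≤ N) (x : ℝ) :
    |sqRpowTerm c α N i x| ≤ (c + x ^ 2) ^ (α - N / 2) := by
  have hs : 0 < c + x ^ 2 := by positivity
  have hx : |x| ≤ (c + x ^ 2) ^ (1 / 2 : ℝ) :=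
    Real.sqrt_eq_rpow (c + x ^ 2) ▸ Real.abs_le_sqrt (le_add_of_nonneg_left hc.le)
  calc |sqRpowTerm c α N i x|
      = |x| ^ (N - 2 * i) * (c + x ^ 2) ^ (α - N + i) := by
        rw [sqRpowTerm, abs_mul, abs_pow, abs_of_pos (Real.rpow_pos_of_pos hs _)]
    _ ≤ ((c + x ^ 2) ^ (1 / 2 : ℝ)) ^ (N - 2 * i) * (c + x ^ 2) ^ (α - N + i) := by
        gcongr
    _ = (c + x ^ 2) ^ (α - N / 2) := by
        rw [← Real.rpow_natCast, ← Real.rpow_mul hs.le, ← Real.rpow_add hs, Nat.cast_sub h]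
        push_cast
        ring_nf

theorem abs_iteratedDeriv_add_sq_rpow_le (hc : 0 < c) (N : ℕ) (x : ℝ) :
    |iteratedDeriv N (fun x ↦ (c + x ^ 2) ^ α) x|
      ≤ 3 ^ N * wp (2 * α) N * N.factorial * (c + x ^ 2) ^ (α - N / 2) := by
  rw [iteratedDeriv_add_sq_rpow α hc]
  calc |∑ i ∈ Finset.range (N + 1), sqRpowCoeff α N i * sqRpowTerm c α N i x|
      ≤ ∑ i ∈ Finset.range (N + 1), |sqRpowCoeff α N i| * (c + x ^ 2) ^ (α - N / 2) := by
        refine (Finset.abs_sum_le_sum_abs _ _).trans (Finset.sum_le_sum fun i _ ↦ ?_)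
        rw [abs_mul]
        rcases Nat.lt_or_ge N (2 * i) with h | h
        · simp [sqRpowCoeff_eq_zero α h]
        · exact mul_le_mul_of_nonneg_left (abs_sqRpowTerm_le α hc h x) (abs_nonneg _)
    _ ≤ 3 ^ N * wp (2 * α) N * N.factorial * (c + x ^ 2) ^ (α - N / 2) := by
        rw [← Finset.sum_mul]
        exact mul_le_mul_of_nonneg_right (sum_abs_sqRpowCoeff_le α N) (by positivity)

end Derivatives

theorem jap2_rpow (a b r : ℝ) : jap2 a b ^ r = (1 + a ^ 2 + b ^ 2) ^ (r / 2) := by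
  rw [jap2, Real.sqrt_eq_rpow, ← Real.rpow_mul (by positivity)]
  ring_nf

/-- derivative bounds for the symbol `⟨k,ξ⟩^{m/2}`. -/
theorem symbol_derivative_bounds :
    ∃ C0 : ℝ, 1 < C0 ∧
      ∀ (N m : ℕ), 1 ≤ N → 1 ≤ m → ∀ (k : ℤ), k ≠ 0 → ∀ ξ : ℝ,
        |iteratedDeriv N (fun x : ℝ => jap2 (k : ℝ) x ^ ((m : ℝ) / 2)) ξ|
          ≤ C0 ^ N * jap2 (k : ℝ) ξ ^ ((m : ℝ) / 2 - N) * wp ((m : ℝ) / 2) N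
              * (N.factorial : ℝ) := by
  refine ⟨3, by norm_num, fun N m _ _ k _ ξ ↦ ?_⟩
  simp only [jap2_rpow]
  calc |iteratedDeriv N (fun x ↦ (1 + (k : ℝ) ^ 2 + x ^ 2) ^ ((m : ℝ) / 2 / 2)) ξ|
      ≤ 3 ^ N * wp (2 * ((m : ℝ) / 2 / 2)) N * N.factorial
          * (1 + (k : ℝ) ^ 2 + ξ ^ 2) ^ ((m : ℝ) / 2 / 2 - N / 2) :=
        abs_iteratedDeriv_add_sq_rpow_le _ (by positivity) N ξ
    _ = _ := by ring_nf
end
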